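/- arXiv:2402.03250 — 3 statements merged into one kernel-verified Lean document; each statement's English description precedes it below -/
import Mathlib

section
/- Let $w\in L^1_{loc}(\mathbb{R}^n)$, $w>0$ a.e., and suppose there exist $p\in(1,\infty)$ and $C>0$ such that for every ball $B$ of radius $1$ and every measurable $F\subset B$ one has $\int_F w \geq C\big(\tfrac{|F|}{|B|}\big)^p \int_B w$. Then there exist $\delta,c>0$ (depending only on $C,p$) such that for every ball $B$ of radius $1$, $|\{x\in B: w(x)\geq \delta\, w_B\}|\geq c\,|B|$, where $w_B$ is the average of $w$ over $B$. -/
open MeasureTheory Metric Set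
open scoped ENNReal

/-! Let `F` be the part of `B` where `w < δ w_B`, with `δ = C 2^{1-p}`, and `r = |F|/|B|`.
The lower bound applied to `F` and the trivial upper bound `∫_F w ≤ δ w_B |F| = δ r ∫_B w`
give `C r^p ≤ δ r`, i.e. `r^{p-1} ≤ 2^{1-p}`, so `r ≤ 1/2` because `p > 1`.
Hence `w ≥ δ w_B` on at least half of `B`. -/

theorem le_half_of_rpow_le_mul {p r : ℝ} (hp : 1 < p) (hr : 0 ≤ r)
    (h : r ^ p ≤ (1 / 2) ^ (p - 1) * r) : r ≤ 1 / 2 := by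
  rcases hr.eq_or_lt with rfl | hr
  · norm_num
  have : r ^ (p - 1) ≤ (1 / 2) ^ (p - 1) := by
    rw [Real.rpow_sub_one hr.ne', div_le_iff₀ hr]
    exact h
  exact (Real.rpow_le_rpow_iff hr.le (by norm_num) (by linarith)).mp this

section

variable {α : Type*} [MeasurableSpace α] {μ : Measure α}

theorem setIntegral_pos_of_ae_pos {s : Set α} {w : α → ℝ} (hs : μ s ≠ 0)
    (hw : IntegrableOn w s μ) (hpos : ∀ᵐ x ∂μ, 0 < w x) : 0 < ∫ x in s, w x ∂μ := by
  rw [setIntegral_pos_iff_support_of_nonneg_ae (ae_restrict_of_ae (hpos.mono fun _ hx => hx.le)) hw]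
  refine (pos_iff_ne_zero.mpr hs).trans_le (measure_mono_ae ?_)
  filter_upwards [hpos] with x hx hxs
  exact ⟨hx.ne', hxs⟩

theorem setIntegral_setOf_lt_le {s : Set α} {w : α → ℝ} (hw : Measurable w) (hs : MeasurableSet s)
    (hμs : μ s ≠ ∞) (hint : IntegrableOn w s μ) (t : ℝ) :
    ∫ x in {x ∈ s | w x < t}, w x ∂μ ≤ t * (μ {x ∈ s | w x < t}).toReal := by
  have hsub : {x ∈ s | w x < t} ⊆ s := sep_subset _ _
  have hfin : μ {x ∈ s | w x < t} ≠ ∞ := ne_top_of_le_ne_top hμs (measure_mono hsub)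
  calc ∫ x in {x ∈ s | w x < t}, w x ∂μ ≤ ∫ _ in {x ∈ s | w x < t}, t ∂μ :=
        setIntegral_mono_on (hint.mono_set hsub) (integrableOn_const hfin)
          (hs.inter (measurableSet_lt hw measurable_const)) fun _ hx => hx.2.le
    _ = t * (μ {x ∈ s | w x < t}).toReal := by
        rw [setIntegral_const, smul_eq_mul, mul_comm, measureReal_def]

def AInftyBoundOn (μ : Measure α) (p C : ℝ) (w : α → ℝ) (B : Set α) : Prop :=
  ∀ F ⊆ B, MeasurableSet F →
    C * ((μ F).toReal / (μ B).toReal) ^ p * ∫ x in B, w x ∂μ ≤ ∫ x in F, w x ∂μ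

variable {B : Set α} {w : α → ℝ} {p C : ℝ}

theorem measure_setOf_lt_average_le_half (hp : 1 < p) (hC : 0 < C) (hB : MeasurableSet B)
    (hB0 : μ B ≠ 0) (hBtop : μ B ≠ ∞) (hw : Measurable w) (hint : IntegrableOn w B μ)
    (hI : 0 < ∫ x in B, w x ∂μ) (hA : AInftyBoundOn μ p C w B) :
    μ {x ∈ B | w x < C * (1 / 2) ^ (p - 1) * ((μ B).toReal⁻¹ * ∫ y in B, w y ∂μ)} ≤ μ B / 2 := by
  set I := ∫ x in B, w x ∂μ
  set F := {x ∈ B | w x < C * (1 / 2) ^ (p - 1) * ((μ B).toReal⁻¹ * I)}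
  have hB' : 0 < (μ B).toReal := ENNReal.toReal_pos hB0 hBtop
  have hFtop : μ F ≠ ∞ := ne_top_of_le_ne_top hBtop (measure_mono (sep_subset _ _))
  set r := (μ F).toReal / (μ B).toReal
  have hr_pow : C * r ^ p * I ≤ C * ((1 / 2) ^ (p - 1) * r) * I :=
    calc C * r ^ p * I ≤ ∫ x in F, w x ∂μ :=
          hA F (sep_subset _ _) (hB.inter (measurableSet_lt hw measurable_const))
      _ ≤ C * (1 / 2) ^ (p - 1) * ((μ B).toReal⁻¹ * I) * (μ F).toReal :=
          setIntegral_setOf_lt_le hw hB hBtop hint _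
      _ = C * ((1 / 2) ^ (p - 1) * r) * I := by
          simp only [r]; field_simp
  have hr : r ≤ 1 / 2 := le_half_of_rpow_le_mul hp (by positivity)
    (le_of_mul_le_mul_left (le_of_mul_le_mul_right hr_pow hI) hC)
  rw [div_le_iff₀ hB'] at hr
  rw [← ENNReal.toReal_le_toReal hFtop (ENNReal.div_ne_top hBtop two_ne_zero), ENNReal.toReal_div]
  simpa [div_eq_mul_inv, mul_comm] using hr

theorem half_measure_le_measure_setOf_average_le_of_measurable (hp : 1 < p) (hC : 0 < C)
    (hB : MeasurableSet B) (hB0 : μ B ≠ 0) (hBtop : μ B ≠ ∞) (hw : Measurable w)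
    (hint : IntegrableOn w B μ) (hI : 0 < ∫ x in B, w x ∂μ) (hA : AInftyBoundOn μ p C w B) :
    μ B / 2 ≤
      μ {x ∈ B | C * (1 / 2) ^ (p - 1) * ((μ B).toReal⁻¹ * ∫ y in B, w y ∂μ) ≤ w x} := by
  set t := C * (1 / 2) ^ (p - 1) * ((μ B).toReal⁻¹ * ∫ y in B, w y ∂μ)
  have hF : MeasurableSet {x ∈ B | w x < t} := hB.inter (measurableSet_lt hw measurable_const)
  have hcompl : {x ∈ B | t ≤ w x} = B \ {x ∈ B | w x < t} := by
    ext x; simp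
  rw [hcompl, measure_sdiff (sep_subset _ _) hF.nullMeasurableSet
    (ne_top_of_le_ne_top hBtop (measure_mono (sep_subset _ _))), ← ENNReal.sub_half hBtop]
  exact tsub_le_tsub_left (measure_setOf_lt_average_le_half hp hC hB hB0 hBtop hw hint hI hA) _

theorem half_measure_le_measure_setOf_average_le (hp : 1 < p) (hC : 0 < C)
    (hB : MeasurableSet B) (hB0 : μ B ≠ 0) (hBtop : μ B ≠ ∞) (hw : AEMeasurable w μ)
    (hint : IntegrableOn w B μ) (hI : 0 < ∫ x in B, w x ∂μ) (hA : AInftyBoundOn μ p C w B) :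
    μ B / 2 ≤
      μ {x ∈ B | C * (1 / 2) ^ (p - 1) * ((μ B).toReal⁻¹ * ∫ y in B, w y ∂μ) ≤ w x} := by
  have hint_eq (s : Set α) : ∫ x in s, w x ∂μ = ∫ x in s, hw.mk w x ∂μ :=
    integral_congr_ae (ae_restrict_of_ae hw.ae_eq_mk)
  have hset (t : ℝ) : μ {x ∈ B | t ≤ w x} = μ {x ∈ B | t ≤ hw.mk w x} := by
    refine measure_congr ?_
    filter_upwards [hw.ae_eq_mk] with x hx
    change (x ∈ B ∧ t ≤ w x) = (x ∈ B ∧ t ≤ hw.mk w x)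
    rw [hx]
  rw [hset, hint_eq]
  refine half_measure_le_measure_setOf_average_le_of_measurable hp hC hB hB0 hBtop hw.measurable_mk
    (hint.congr_fun_ae (ae_restrict_of_ae hw.ae_eq_mk)) (hint_eq B ▸ hI) fun F hFB hF => ?_
  simpa only [hint_eq] using hA F hFB hF

end

/-- the quantitative A∞ condition (2) implies the level-set
condition (4), with constants depending only on `C` and `p`. -/
theorem stmt4 (n : ℕ) (p C : ℝ) (hp : 1 < p) (hC : 0 < C) :
    ∃ δ > (0:ℝ), ∃ c > (0:ℝ),
      ∀ w : EuclideanSpace ℝ (Fin n) → ℝ,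
        LocallyIntegrable w volume → (∀ᵐ x, 0 < w x) →
        (∀ (x₀ : EuclideanSpace ℝ (Fin n)) (F : Set (EuclideanSpace ℝ (Fin n))),
          F ⊆ ball x₀ 1 → MeasurableSet F →
          C * ((volume F).toReal / (volume (ball x₀ 1)).toReal) ^ p *
              ∫ x in ball x₀ 1, w x ≤ ∫ x in F, w x) →
        ∀ x₀ : EuclideanSpace ℝ (Fin n),
          ENNReal.ofReal c * volume (ball x₀ 1) ≤
            volume {x ∈ ball x₀ 1 |
              δ * ((volume (ball x₀ 1)).toReal⁻¹ * ∫ y in ball x₀ 1, w y) ≤ w x} := by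
  refine ⟨C * (1 / 2) ^ (p - 1), by positivity, 1 / 2, by norm_num, fun w hw hpos hA x₀ => ?_⟩
  have hB0 : volume (ball x₀ 1) ≠ 0 := (measure_ball_pos volume x₀ one_pos).ne'
  have hint : IntegrableOn w (ball x₀ 1) :=
    (hw.integrableOn_isCompact (isCompact_closedBall x₀ 1)).mono_set ball_subset_closedBall
  have hc : ENNReal.ofReal (1 / 2) * volume (ball x₀ 1) = volume (ball x₀ 1) / 2 := by
    rw [one_div, ENNReal.ofReal_inv_of_pos two_pos, ENNReal.ofReal_ofNat, mul_comm, div_eq_mul_inv]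
  rw [hc]
  exact half_measure_le_measure_setOf_average_le hp hC measurableSet_ball hB0
    measure_ball_lt_top.ne hw.aestronglyMeasurable.aemeasurable hint
    (setIntegral_pos_of_ae_pos hB0 hint hpos) (hA x₀)
end

section
/- In the Euclidean setting ($\mathbb{R}^n$, Lebesgue measure, usual gradient), let $1\leq p<\infty$ and $\alpha\in(0,1)$. There exists $C=C(p,\alpha,n)>0$ such that for every ball $B$ of radius $r\in(0,1]$, every $w\in A^\alpha_\infty(\mathbb{R}^n)$ with $\frac{1}{|B|}\int_B w \geq r^{-p}$, and every $u\in W^{1,p}(B)$: $\int_B (|\nabla u|^p + w|u|^p)\,dx \geq C r^{-p}\int_B |u|^p\,dx$. -/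
/-!
Let `F ⊆ B` be the set where `|u|^p` exceeds `α / 2^p` times its mean over `B`.
If `|F| ≥ (1 - α)|B|`, the `A_∞` condition gives `∫_F w ≥ α ∫_B w ≥ α r^{-p} |B|`, and the weight
term alone dominates. Otherwise `|B \ F| ≥ α |B|` while `|u|^p` is small on `B \ F`, and the
Poincaré-type inequality `|B \ F| ∫_B |u|^p ≲ |B| (r^p ∫_B |∇u|^p + ∫_{B \ F} |u|^p)` leaves
`∫_B |u|^p ≲ r^p ∫_B |∇u|^p`. That inequality comes from integrating
`|u x| ≤ |u y| + |x - y| ∫_0^1 |∇u (y + t (x - y))| dt` over `x, y ∈ B`: for `t ≥ 1/2` the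
substitution `x ↦ y + t (x - y)` maps `B` into itself with Jacobian `t^n ≥ 2^{-n}`, and for
`t ≤ 1/2` the same holds after exchanging `x` and `y`.
-/

open MeasureTheory Metric Set
open scoped ENNReal

/-- The Muckenhoupt-type class `A_∞^α(ℝ^n)` (Definition 2.11 of the paper). -/
def IsAinfty (n : ℕ) (α : ℝ) (w : EuclideanSpace ℝ (Fin n) → ℝ) : Prop :=
  LocallyIntegrable w volume ∧ (∀ᵐ x, 0 < w x) ∧
  ∀ (x₀ : EuclideanSpace ℝ (Fin n)) (r : ℝ), 0 < r →
    ∀ E ⊆ ball x₀ r, MeasurableSet E →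
      ENNReal.ofReal (1 - α) * volume (ball x₀ r) ≤ volume E →
      α * ∫ x in ball x₀ r, w x ≤ ∫ x in E, w x

open Module AffineMap

theorem rpow_lintegral_le_lintegral_rpow {α : Type*} [MeasurableSpace α] {μ : Measure α}
    [IsProbabilityMeasure μ] {f : α → ℝ≥0∞} (hf : AEMeasurable f μ) {p : ℝ} (hp : 1 ≤ p) :
    (∫⁻ a, f a ∂μ) ^ p ≤ ∫⁻ a, f a ^ p ∂μ := by
  have h := eLpNorm'_le_eLpNorm'_of_exponent_le zero_lt_one hp μ hf.aestronglyMeasurable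
  simp only [eLpNorm', enorm_eq_self, ENNReal.rpow_one, div_one] at h
  calc (∫⁻ a, f a ∂μ) ^ p ≤ ((∫⁻ a, f a ^ p ∂μ) ^ (1 / p)) ^ p := by gcongr
    _ = ∫⁻ a, f a ^ p ∂μ := by
      rw [← ENNReal.rpow_mul, one_div_mul_cancel (by positivity), ENNReal.rpow_one]

theorem ofReal_setIntegral_norm_rpow {X G : Type*} [MeasurableSpace X] {μ : Measure X}
    [NormedAddCommGroup G] {f : X → G} {s : Set X} {p : ℝ} (hp : 0 ≤ p)
    (hf : IntegrableOn (fun x => ‖f x‖ ^ p) s μ) :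
    ENNReal.ofReal (∫ x in s, ‖f x‖ ^ p ∂μ) = ∫⁻ x in s, ‖f x‖ₑ ^ p ∂μ := by
  rw [ofReal_integral_eq_lintegral_ofReal hf (ae_of_all _ fun x => by positivity)]
  simp only [← ofReal_norm, ENNReal.ofReal_rpow_of_nonneg (norm_nonneg _) hp]

theorem ediam_ball_le {X : Type*} [PseudoMetricSpace X] (x : X) (r : ℝ) :
    ediam (ball x r) ≤ ENNReal.ofReal (2 * r) :=
  ediam_le fun y hy z hz => by
    rw [edist_dist]
    exact ENNReal.ofReal_le_ofReal
      (by linarith [dist_triangle_right y z x, mem_ball.1 hy, mem_ball.1 hz])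

theorem mul_measureReal_le_measureReal_sdiff {X : Type*} [MeasurableSpace X] {μ : Measure X}
    {s t : Set X} (hs : μ s ≠ ∞) {α : ℝ} (hα : α ≤ 1)
    (ht : μ t < ENNReal.ofReal (1 - α) * μ s) : α * μ.real s ≤ μ.real (s \ t) := by
  have h := ENNReal.toReal_mono (ENNReal.mul_ne_top ENNReal.ofReal_ne_top hs) ht.le
  rw [ENNReal.toReal_mul, ENNReal.toReal_ofReal (by linarith), ← measureReal_def,
    ← measureReal_def] at h
  linarith [le_measureReal_sdiff (μ := μ) (s₁ := s) ht.ne_top]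

theorem setIntegral_sdiff_superlevel_le {X : Type*} [MeasurableSpace X] {μ : Measure X}
    {s : Set X} (hsm : MeasurableSet s) (hs : μ s ≠ ∞) {f : X → ℝ} (hfm : Measurable f)
    (hf : IntegrableOn f s μ) (hf0 : ∀ x ∈ s, 0 ≤ f x) {c : ℝ} (hc : 0 ≤ c) :
    ∫ x in s \ {x ∈ s | c * ⨍ y in s, f y ∂μ < f x}, f x ∂μ ≤ c * ∫ x in s, f x ∂μ := by
  set θ := c * ⨍ y in s, f y ∂μ
  have hθ : 0 ≤ θ := mul_nonneg hc <| by
    rw [setAverage_eq]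
    exact smul_nonneg (by positivity) (setIntegral_nonneg hsm hf0)
  calc _ ≤ ∫ _ in s \ {x ∈ s | θ < f x}, θ ∂μ :=
        setIntegral_mono_on (hf.mono_set sdiff_subset)
          (integrableOn_const (measure_ne_top_of_subset sdiff_subset hs))
          (hsm.diff (hsm.inter (measurableSet_lt measurable_const hfm)))
          fun x hx => not_lt.1 fun h => hx.2 ⟨hx.1, h⟩
    _ = μ.real (s \ {x ∈ s | θ < f x}) * θ := by rw [setIntegral_const, smul_eq_mul]
    _ ≤ μ.real s * θ := mul_le_mul_of_nonneg_right (measureReal_mono sdiff_subset hs) hθ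
    _ = c * ∫ x in s, f x ∂μ := by
        rw [mul_left_comm, ← smul_eq_mul (μ.real s), measure_smul_setAverage _ hs]

section Poincare

variable {E F : Type*} [NormedAddCommGroup E] [NormedSpace ℝ E]
  [NormedAddCommGroup F] [NormedSpace ℝ F] [CompleteSpace F]

theorem enorm_sub_le_lintegral_deriv {f : ℝ → F} (hf : Differentiable ℝ f) {a b : ℝ}
    (hab : a ≤ b) : ‖f b - f a‖ₑ ≤ ∫⁻ t in Icc a b, ‖deriv f t‖ₑ := by
  by_cases hfin : ∫⁻ t in Icc a b, ‖deriv f t‖ₑ = ∞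
  · simp [hfin]
  have hint : IntervalIntegrable (deriv f) volume a b := by
    rw [intervalIntegrable_iff_integrableOn_Icc_of_le hab]
    exact ⟨aestronglyMeasurable_deriv f _, lt_top_iff_ne_top.2 hfin⟩
  rw [← intervalIntegral.integral_eq_sub_of_hasDerivAt (fun t _ => (hf t).hasDerivAt) hint,
    intervalIntegral.integral_of_le hab, restrict_Ioc_eq_restrict_Icc]
  exact enorm_integral_le_lintegral_enorm _

theorem enorm_sub_le_lintegral_fderiv_lineMap {u : E → F} (hu : Differentiable ℝ u) (x y : E) :
    ‖u x - u y‖ₑ ≤ ‖x - y‖ₑ * ∫⁻ t in Icc (0:ℝ) 1, ‖fderiv ℝ u (lineMap y x t)‖ₑ := by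
  have hderiv : ∀ t : ℝ, HasDerivAt (fun s => u (lineMap y x s))
      (fderiv ℝ u (lineMap y x t) (x - y)) t := fun t =>
    (hu _).hasFDerivAt.comp_hasDerivAt t hasDerivAt_lineMap
  have h := enorm_sub_le_lintegral_deriv (fun t => (hderiv t).differentiableAt) zero_le_one
  simp only [lineMap_apply_zero, lineMap_apply_one, (hderiv _).deriv] at h
  refine h.trans ?_
  rw [← lintegral_const_mul' _ _ enorm_ne_top]
  gcongr with t
  rw [mul_comm]
  exact (fderiv ℝ u _).le_opENorm _

variable [MeasurableSpace E] [BorelSpace E]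

theorem enorm_rpow_le_lintegral_fderiv_lineMap {u : E → F} (hu : Differentiable ℝ u) {p : ℝ}
    (hp : 1 ≤ p) (x y : E) :
    ‖u x‖ₑ ^ p ≤ 2 ^ (p - 1) * (‖u y‖ₑ ^ p +
      ‖x - y‖ₑ ^ p * ∫⁻ t in Icc (0:ℝ) 1, ‖fderiv ℝ u (lineMap y x t)‖ₑ ^ p) := by
  have hmeas : Measurable fun t : ℝ => ‖fderiv ℝ u (lineMap y x t)‖ₑ :=
    (measurable_fderiv ℝ u).enorm.comp lineMap_continuous.measurable
  have : IsProbabilityMeasure (volume.restrict (Icc (0:ℝ) 1)) := ⟨by simp⟩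
  set I := ∫⁻ t in Icc (0:ℝ) 1, ‖fderiv ℝ u (lineMap y x t)‖ₑ
  calc ‖u x‖ₑ ^ p ≤ (‖u y‖ₑ + ‖x - y‖ₑ * I) ^ p := by
        gcongr
        calc ‖u x‖ₑ = ‖u y + (u x - u y)‖ₑ := by rw [add_sub_cancel]
          _ ≤ _ := enorm_add_le _ _
          _ ≤ _ := by gcongr; exact enorm_sub_le_lintegral_fderiv_lineMap hu x y
    _ ≤ 2 ^ (p - 1) * (‖u y‖ₑ ^ p + (‖x - y‖ₑ * I) ^ p) :=
        ENNReal.rpow_add_le_mul_rpow_add_rpow _ _ hp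
    _ ≤ _ := by
        rw [ENNReal.mul_rpow_of_nonneg _ _ (by linarith)]
        gcongr
        exact rpow_lintegral_le_lintegral_rpow hmeas.aemeasurable hp

variable [FiniteDimensional ℝ E] (μ : Measure E) [μ.IsAddHaarMeasure]

theorem lintegral_comp_smul_add (f : E → ℝ≥0∞) {c : ℝ} (hc : c ≠ 0) (v : E) :
    ∫⁻ x, f (c • x + v) ∂μ = ENNReal.ofReal |(c ^ finrank ℝ E)⁻¹| * ∫⁻ x, f x ∂μ := by
  rw [← lintegral_add_right_eq_self f v, ← smul_eq_mul, ← lintegral_smul_measure,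
    ← Measure.map_addHaar_smul μ hc, ← MeasurableEquiv.coe_smul₀ (α := E) hc,
    lintegral_map_equiv]
  rfl

theorem setLIntegral_comp_lineMap_le {B : Set E} (hB : Convex ℝ B) (hBm : MeasurableSet B)
    {y : E} (hy : y ∈ B) {t : ℝ} (ht : t ∈ Icc (1 / 2 : ℝ) 1) (g : E → ℝ≥0∞) :
    ∫⁻ x in B, g (lineMap y x t) ∂μ ≤ 2 ^ finrank ℝ E * ∫⁻ z in B, g z ∂μ := by
  have ht0 : 0 < t := by linarith [ht.1]
  have hmaps : ∀ x ∈ B, lineMap y x t ∈ B := fun x hx =>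
    hB.lineMap_mem hy hx ⟨ht0.le, ht.2⟩
  calc ∫⁻ x in B, g (lineMap y x t) ∂μ = ∫⁻ x in B, B.indicator g (t • x + (1 - t) • y) ∂μ := by
        refine setLIntegral_congr_fun hBm fun x hx => ?_
        rw [add_comm, ← lineMap_apply_module, indicator_of_mem (hmaps x hx)]
    _ ≤ ∫⁻ x, B.indicator g (t • x + (1 - t) • y) ∂μ := setLIntegral_le_lintegral _ _
    _ = ENNReal.ofReal |(t ^ finrank ℝ E)⁻¹| * ∫⁻ z in B, g z ∂μ := by
        rw [lintegral_comp_smul_add μ _ ht0.ne', lintegral_indicator hBm]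
    _ ≤ 2 ^ finrank ℝ E * ∫⁻ z in B, g z ∂μ := by
        gcongr
        rw [abs_of_pos (by positivity), ← inv_pow, ENNReal.ofReal_pow (by positivity)]
        gcongr
        rw [← ENNReal.ofReal_ofNat 2]
        exact ENNReal.ofReal_le_ofReal (inv_le_of_inv_le₀ two_pos (by linarith [ht.1]))

theorem lintegral_lintegral_comp_lineMap_le {B : Set E} (hB : Convex ℝ B) (hBm : MeasurableSet B)
    {g : E → ℝ≥0∞} (hg : Measurable g) {t : ℝ} (ht : t ∈ Icc (0 : ℝ) 1) :
    ∫⁻ y in B, ∫⁻ x in B, g (lineMap y x t) ∂μ ∂μ ≤ 2 ^ finrank ℝ E * μ B * ∫⁻ z in B, g z ∂μ := by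
  have key : ∀ s ∈ Icc (1 / 2 : ℝ) 1,
      ∫⁻ y in B, ∫⁻ x in B, g (lineMap y x s) ∂μ ∂μ ≤ 2 ^ finrank ℝ E * μ B * ∫⁻ z in B, g z ∂μ :=
    fun s hs => calc
      _ ≤ ∫⁻ _ in B, 2 ^ finrank ℝ E * ∫⁻ z in B, g z ∂μ ∂μ :=
        setLIntegral_mono' hBm fun y hy => setLIntegral_comp_lineMap_le μ hB hBm hy hs g
      _ = _ := by rw [setLIntegral_const, mul_right_comm]
  rcases le_total (1 / 2) t with h | h
  · exact key t ⟨h, ht.2⟩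
  · rw [lintegral_lintegral_swap (f := fun y x => g (lineMap y x t))
      (hg.comp (continuous_fst.lineMap continuous_snd continuous_const).measurable).aemeasurable]
    simp only [← lineMap_apply_one_sub _ _ t]
    exact key (1 - t) ⟨by linarith, by linarith [ht.1]⟩

theorem lintegral_lintegral_lintegral_comp_lineMap_le {B : Set E} (hB : Convex ℝ B)
    (hBm : MeasurableSet B) {g : E → ℝ≥0∞} (hg : Measurable g) :
    ∫⁻ y in B, ∫⁻ x in B, (∫⁻ t in Icc (0 : ℝ) 1, g (lineMap y x t)) ∂μ ∂μ ≤
      2 ^ finrank ℝ E * μ B * ∫⁻ z in B, g z ∂μ := by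
  have hswap_inner : ∀ y, ∫⁻ x in B, (∫⁻ t in Icc (0 : ℝ) 1, g (lineMap y x t)) ∂μ =
      ∫⁻ t in Icc (0 : ℝ) 1, ∫⁻ x in B, g (lineMap y x t) ∂μ := fun y =>
    lintegral_lintegral_swap (f := fun x t => g (lineMap y x t))
      (hg.comp (continuous_const.lineMap continuous_fst continuous_snd).measurable).aemeasurable
  have hswap_outer := lintegral_lintegral_swap (μ := μ.restrict B)
    (ν := volume.restrict (Icc (0 : ℝ) 1)) (f := fun y t => ∫⁻ x in B, g (lineMap y x t) ∂μ)
    (Measurable.lintegral_prod_right' (hg.comp (continuous_fst.fst.lineMap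
      continuous_snd continuous_fst.snd).measurable)).aemeasurable
  calc ∫⁻ y in B, ∫⁻ x in B, (∫⁻ t in Icc (0 : ℝ) 1, g (lineMap y x t)) ∂μ ∂μ
      = ∫⁻ t in Icc (0 : ℝ) 1, ∫⁻ y in B, ∫⁻ x in B, g (lineMap y x t) ∂μ ∂μ := by
        simp only [hswap_inner, hswap_outer]
    _ ≤ ∫⁻ _ in Icc (0 : ℝ) 1, 2 ^ finrank ℝ E * μ B * ∫⁻ z in B, g z ∂μ :=
        setLIntegral_mono' measurableSet_Icc fun t ht =>
          lintegral_lintegral_comp_lineMap_le μ hB hBm hg ht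
    _ = 2 ^ finrank ℝ E * μ B * ∫⁻ z in B, g z ∂μ := by simp

theorem measure_mul_setLIntegral_enorm_rpow_le {u : E → F} (hu : Differentiable ℝ u) {p : ℝ}
    (hp : 1 ≤ p) {B S : Set E} (hB : Convex ℝ B) (hBm : MeasurableSet B) (hSB : S ⊆ B) :
    μ S * ∫⁻ x in B, ‖u x‖ₑ ^ p ∂μ ≤ 2 ^ (p - 1) * μ B *
      (ediam B ^ p * 2 ^ finrank ℝ E * ∫⁻ x in B, ‖fderiv ℝ u x‖ₑ ^ p ∂μ +
        ∫⁻ y in S, ‖u y‖ₑ ^ p ∂μ) := by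
  set g : E → ℝ≥0∞ := fun z => ‖fderiv ℝ u z‖ₑ ^ p
  set I : E → E → ℝ≥0∞ := fun y x => ∫⁻ t in Icc (0:ℝ) 1, g (lineMap y x t)
  have hg : Measurable g := (measurable_fderiv ℝ u).enorm.pow_const p
  have hI : Measurable (Function.uncurry I) := Measurable.lintegral_prod_right'
    (hg.comp (continuous_fst.fst.lineMap continuous_fst.snd continuous_snd).measurable)
  have hIB : Measurable fun y => ∫⁻ x in B, I y x ∂μ := hI.lintegral_prod_right'
  have hu_p : Measurable fun y => ‖u y‖ₑ ^ p := hu.continuous.enorm.measurable.pow_const p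
  have h2 : (2 : ℝ≥0∞) ^ (p - 1) ≠ ∞ := ENNReal.rpow_ne_top_of_nonneg (by linarith) (by simp)
  have hy : ∀ y ∈ S, ∫⁻ x in B, ‖u x‖ₑ ^ p ∂μ ≤
      2 ^ (p - 1) * (μ B * ‖u y‖ₑ ^ p + ediam B ^ p * ∫⁻ x in B, I y x ∂μ) := fun y hy => calc
    _ ≤ ∫⁻ x in B, 2 ^ (p - 1) * (‖u y‖ₑ ^ p + ediam B ^ p * I y x) ∂μ := by
      refine setLIntegral_mono' hBm fun x hx =>
        (enorm_rpow_le_lintegral_fderiv_lineMap hu hp x y).trans ?_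
      gcongr
      rw [← edist_eq_enorm_sub]
      exact edist_le_ediam_of_mem hx (hSB hy)
    _ = _ := by
      have hIy : Measurable (I y) := hI.of_uncurry_left
      rw [lintegral_const_mul' _ _ h2, lintegral_add_left measurable_const, setLIntegral_const,
        lintegral_const_mul _ hIy, mul_comm (‖u y‖ₑ ^ p)]
  calc μ S * ∫⁻ x in B, ‖u x‖ₑ ^ p ∂μ = ∫⁻ _ in S, ∫⁻ x in B, ‖u x‖ₑ ^ p ∂μ ∂μ := by
        rw [setLIntegral_const, mul_comm]
    _ ≤ ∫⁻ y in S, 2 ^ (p - 1) * (μ B * ‖u y‖ₑ ^ p + ediam B ^ p * ∫⁻ x in B, I y x ∂μ) ∂μ :=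
        setLIntegral_mono (by fun_prop) hy
    _ = 2 ^ (p - 1) * (μ B * ∫⁻ y in S, ‖u y‖ₑ ^ p ∂μ +
          ediam B ^ p * ∫⁻ y in S, ∫⁻ x in B, I y x ∂μ ∂μ) := by
        rw [lintegral_const_mul' _ _ h2, lintegral_add_right _ (hIB.const_mul _),
          lintegral_const_mul _ hu_p, lintegral_const_mul _ hIB]
    _ ≤ 2 ^ (p - 1) * (μ B * ∫⁻ y in S, ‖u y‖ₑ ^ p ∂μ +
          ediam B ^ p * (2 ^ finrank ℝ E * μ B * ∫⁻ z in B, g z ∂μ)) := by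
        gcongr
        exact (lintegral_mono_set hSB).trans
          (lintegral_lintegral_lintegral_comp_lineMap_le μ hB hBm hg)
    _ = _ := by ring

theorem measureReal_mul_setIntegral_norm_rpow_ball_le {u : E → F} (hu : Differentiable ℝ u)
    {p : ℝ} (hp : 1 ≤ p) {x₀ : E} {r : ℝ} (hr : 0 ≤ r) {S : Set E} (hSB : S ⊆ ball x₀ r)
    (hu_int : IntegrableOn (fun x => ‖u x‖ ^ p) (ball x₀ r) μ)
    (hdu_int : IntegrableOn (fun x => ‖fderiv ℝ u x‖ ^ p) (ball x₀ r) μ) :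
    μ.real S * ∫ x in ball x₀ r, ‖u x‖ ^ p ∂μ ≤ 2 ^ (p - 1) * μ.real (ball x₀ r) *
      ((2 * r) ^ p * 2 ^ finrank ℝ E * ∫ x in ball x₀ r, ‖fderiv ℝ u x‖ ^ p ∂μ +
        ∫ x in S, ‖u x‖ ^ p ∂μ) := by
  have hp0 : 0 ≤ p := by linarith
  have hS : μ S ≠ ∞ := (measure_mono hSB).trans_lt measure_ball_lt_top |>.ne
  rw [← ENNReal.ofReal_le_ofReal_iff (by positivity), ENNReal.ofReal_mul (by positivity),
    ENNReal.ofReal_mul (by positivity), ENNReal.ofReal_mul (by positivity),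
    ENNReal.ofReal_add (by positivity) (by positivity), ENNReal.ofReal_mul (by positivity),
    ENNReal.ofReal_mul (by positivity), ofReal_measureReal hS,
    ofReal_measureReal measure_ball_lt_top.ne,
    ofReal_setIntegral_norm_rpow hp0 hu_int, ofReal_setIntegral_norm_rpow hp0 hdu_int,
    ofReal_setIntegral_norm_rpow hp0 (hu_int.mono_set hSB),
    ← ENNReal.ofReal_rpow_of_nonneg (by positivity) hp0,
    ← ENNReal.ofReal_rpow_of_nonneg zero_le_two (by linarith), ENNReal.ofReal_pow zero_le_two,
    ENNReal.ofReal_ofNat]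
  refine (measure_mul_setLIntegral_enorm_rpow_le μ hu hp (convex_ball x₀ r)
    measurableSet_ball hSB).trans ?_
  gcongr
  exact ediam_ball_le x₀ r

theorem le_setIntegral_norm_fderiv_rpow_of_superlevel {u : E → F}
    (hu : Differentiable ℝ u) {p : ℝ} (hp : 1 ≤ p) {α : ℝ} (hα : 0 ≤ α) (hα1 : α ≤ 1)
    {x₀ : E} {r : ℝ} (hr : 0 < r)
    (hF : μ {x ∈ ball x₀ r | α / 2 ^ p * ⨍ y in ball x₀ r, ‖u y‖ ^ p ∂μ < ‖u x‖ ^ p} <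
      ENNReal.ofReal (1 - α) * μ (ball x₀ r))
    (hu_int : IntegrableOn (fun x => ‖u x‖ ^ p) (ball x₀ r) μ)
    (hdu_int : IntegrableOn (fun x => ‖fderiv ℝ u x‖ ^ p) (ball x₀ r) μ) :
    α / (4 ^ p * 2 ^ finrank ℝ E) * r ^ (-p) * ∫ x in ball x₀ r, ‖u x‖ ^ p ∂μ ≤
      ∫ x in ball x₀ r, ‖fderiv ℝ u x‖ ^ p ∂μ := by
  set B := ball x₀ r
  set A := ∫ x in B, ‖u x‖ ^ p ∂μ
  set D := ∫ x in B, ‖fderiv ℝ u x‖ ^ p ∂μ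
  set V := μ.real B
  set S := B \ {x ∈ B | α / 2 ^ p * ⨍ y in B, ‖u y‖ ^ p ∂μ < ‖u x‖ ^ p}
  have hV : 0 < V := ENNReal.toReal_pos (measure_ball_pos μ x₀ hr).ne' measure_ball_lt_top.ne
  have hA : 0 ≤ A := by positivity
  have hD : 0 ≤ D := by positivity
  have hSvol : α * V ≤ μ.real S :=
    mul_measureReal_le_measureReal_sdiff measure_ball_lt_top.ne hα1 hF
  have hSint : ∫ x in S, ‖u x‖ ^ p ∂μ ≤ α / 2 ^ p * A :=
    setIntegral_sdiff_superlevel_le measurableSet_ball measure_ball_lt_top.ne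
      (hu.continuous.norm.measurable.pow_const p) hu_int (fun x _ => by positivity)
      (by positivity)
  have hP := measureReal_mul_setIntegral_norm_rpow_ball_le μ hu hp hr.le
    (sdiff_subset : S ⊆ B) hu_int hdu_int
  rw [Real.rpow_sub_one two_ne_zero, Real.mul_rpow zero_le_two hr.le] at hP
  rw [show (4 : ℝ) ^ p = 2 ^ p * 2 ^ p by rw [← Real.mul_rpow zero_le_two zero_le_two]; norm_num,
    Real.rpow_neg hr.le]
  have h2p : (0 : ℝ) < 2 ^ p := by positivity
  have hrp : 0 < r ^ p := by positivity
  have key : V * (α * A) ≤ V * (2 ^ p * 2 ^ p * 2 ^ finrank ℝ E * r ^ p * D) := by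
    have h : α * V * A ≤ 2 ^ p / 2 * V * (2 ^ p * r ^ p * 2 ^ finrank ℝ E * D + α / 2 ^ p * A) :=
      (mul_le_mul_of_nonneg_right hSvol hA).trans (hP.trans (by gcongr))
    have e : 2 ^ p / 2 * V * (2 ^ p * r ^ p * 2 ^ finrank ℝ E * D + α / 2 ^ p * A) =
        V * (2 ^ p * 2 ^ p * 2 ^ finrank ℝ E * r ^ p * D) / 2 + V * (α * A) / 2 := by
      field_simp
    linarith
  rw [show α / (2 ^ p * 2 ^ p * 2 ^ finrank ℝ E) * (r ^ p)⁻¹ * A =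
    α * A / (2 ^ p * 2 ^ p * 2 ^ finrank ℝ E * r ^ p) by field_simp, div_le_iff₀ (by positivity)]
  linarith [le_of_mul_le_mul_left key hV]

end Poincare

section Ainfty

variable {n : ℕ} {α : ℝ} {w : EuclideanSpace ℝ (Fin n) → ℝ} {x₀ : EuclideanSpace ℝ (Fin n)}
  {r : ℝ}

theorem IsAinfty.mul_setIntegral_le (hw : IsAinfty n α w) (hr : 0 < r)
    {F : Set (EuclideanSpace ℝ (Fin n))} (hFB : F ⊆ ball x₀ r) (hFm : MeasurableSet F)
    (hF : ENNReal.ofReal (1 - α) * volume (ball x₀ r) ≤ volume F)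
    {f : EuclideanSpace ℝ (Fin n) → ℝ} {L : ℝ} (hL : 0 ≤ L) (hfF : ∀ x ∈ F, L ≤ f x)
    (hf : ∀ x ∈ ball x₀ r, 0 ≤ f x) (hwf : IntegrableOn (fun x => w x * f x) (ball x₀ r)) :
    L * (α * ∫ x in ball x₀ r, w x) ≤ ∫ x in ball x₀ r, w x * f x := by
  have hwF : IntegrableOn w F :=
    (hw.1.integrableOn_isCompact (isCompact_closedBall x₀ r)).mono_set
      (hFB.trans ball_subset_closedBall)
  calc L * (α * ∫ x in ball x₀ r, w x) ≤ L * ∫ x in F, w x := by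
        gcongr
        exact hw.2.2 x₀ r hr F hFB hFm hF
    _ = ∫ x in F, L * w x := (integral_const_mul L _).symm
    _ ≤ ∫ x in F, w x * f x := by
        refine setIntegral_mono_on_ae (hwF.const_mul L) (hwf.mono_set hFB) hFm ?_
        filter_upwards [hw.2.1] with x hx hxF
        nlinarith [hfF x hxF]
    _ ≤ ∫ x in ball x₀ r, w x * f x := by
        refine setIntegral_mono_set hwf ?_ hFB.eventuallyLE
        filter_upwards [ae_restrict_of_ae hw.2.1, ae_restrict_mem measurableSet_ball] with x hx hxB
        exact mul_nonneg hx.le (hf x hxB)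

theorem IsAinfty.le_setIntegral_mul_norm_rpow_of_superlevel (hw : IsAinfty n α w)
    (hα : 0 ≤ α) {p : ℝ} (hr : 0 < r)
    (hwB : r ^ (-p) ≤ (volume (ball x₀ r)).toReal⁻¹ * ∫ y in ball x₀ r, w y)
    {u : EuclideanSpace ℝ (Fin n) → ℝ} (hu : Continuous u)
    (hF : ENNReal.ofReal (1 - α) * volume (ball x₀ r) ≤
      volume {x ∈ ball x₀ r | α / 2 ^ p * ⨍ y in ball x₀ r, ‖u y‖ ^ p < ‖u x‖ ^ p})
    (hwu : IntegrableOn (fun x => w x * ‖u x‖ ^ p) (ball x₀ r)) :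
    α * (α / 2 ^ p) * r ^ (-p) * ∫ x in ball x₀ r, ‖u x‖ ^ p ≤
      ∫ x in ball x₀ r, w x * ‖u x‖ ^ p := by
  have hV : 0 < volume.real (ball x₀ r) :=
    ENNReal.toReal_pos (measure_ball_pos volume x₀ hr).ne' measure_ball_lt_top.ne
  have hwB' : r ^ (-p) * volume.real (ball x₀ r) ≤ ∫ y in ball x₀ r, w y := by
    rwa [← le_inv_mul_iff₀' hV]
  rw [setAverage_eq, smul_eq_mul] at hF
  refine le_trans ?_ (hw.mul_setIntegral_le hr (sep_subset _ _)
    (measurableSet_ball.inter (measurableSet_lt measurable_const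
      (hu.norm.measurable.pow_const p))) hF (by positivity) (fun x hx => hx.2.le)
    (fun x _ => by positivity) hwu)
  calc α * (α / 2 ^ p) * r ^ (-p) * ∫ x in ball x₀ r, ‖u x‖ ^ p =
      α / 2 ^ p * ((volume.real (ball x₀ r))⁻¹ * ∫ y in ball x₀ r, ‖u y‖ ^ p) *
        (α * (r ^ (-p) * volume.real (ball x₀ r))) := by field_simp
    _ ≤ _ := by gcongr

end Ainfty

/-- Euclidean Fefferman-type "Main Lemma" for `A_∞` weights. -/
theorem stmt15 (n : ℕ) (p : ℝ) (hp : 1 ≤ p) (α : ℝ) (hα : α ∈ Set.Ioo (0:ℝ) 1) :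
    ∃ C > (0:ℝ), ∀ (x₀ : EuclideanSpace ℝ (Fin n)) (r : ℝ), 0 < r → r ≤ 1 →
      ∀ w : EuclideanSpace ℝ (Fin n) → ℝ, IsAinfty n α w →
        (r ^ (-p) ≤ (volume (ball x₀ r)).toReal⁻¹ * ∫ y in ball x₀ r, w y) →
        ∀ u : EuclideanSpace ℝ (Fin n) → ℝ, Differentiable ℝ u →
          IntegrableOn (fun x => |u x| ^ p) (ball x₀ r) →
          IntegrableOn (fun x => ‖fderiv ℝ u x‖ ^ p) (ball x₀ r) →
          IntegrableOn (fun x => w x * |u x| ^ p) (ball x₀ r) →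
          C * r ^ (-p) * ∫ x in ball x₀ r, |u x| ^ p ≤
            ∫ x in ball x₀ r, (‖fderiv ℝ u x‖ ^ p + w x * |u x| ^ p) := by
  obtain ⟨hα0, hα1⟩ := hα
  refine ⟨min (α * (α / 2 ^ p)) (α / (4 ^ p * 2 ^ n)), by positivity, ?_⟩
  intro x₀ r hr _ w hw hwB u hu hu_int hdu_int hwu_int
  simp only [← Real.norm_eq_abs] at hu_int hwu_int ⊢
  have hD : 0 ≤ ∫ x in ball x₀ r, ‖fderiv ℝ u x‖ ^ p := by positivity
  have hW : 0 ≤ ∫ x in ball x₀ r, w x * ‖u x‖ ^ p :=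
    integral_nonneg_of_ae <| ae_restrict_of_ae <| hw.2.1.mono fun x hx =>
      mul_nonneg hx.le (by positivity)
  rw [integral_add hdu_int hwu_int]
  by_cases hF : ENNReal.ofReal (1 - α) * volume (ball x₀ r) ≤
      volume {x ∈ ball x₀ r | α / 2 ^ p * ⨍ y in ball x₀ r, ‖u y‖ ^ p < ‖u x‖ ^ p}
  · calc _ ≤ α * (α / 2 ^ p) * r ^ (-p) * ∫ x in ball x₀ r, ‖u x‖ ^ p := by
          gcongr; exact min_le_left _ _
      _ ≤ ∫ x in ball x₀ r, w x * ‖u x‖ ^ p :=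
          hw.le_setIntegral_mul_norm_rpow_of_superlevel hα0.le hr hwB hu.continuous hF
            hwu_int
      _ ≤ _ := le_add_of_nonneg_left hD
  · have h := le_setIntegral_norm_fderiv_rpow_of_superlevel volume hu hp hα0.le hα1.le
      hr (not_le.1 hF) hu_int hdu_int
    rw [finrank_euclideanSpace_fin] at h
    calc _ ≤ α / (4 ^ p * 2 ^ n) * r ^ (-p) * ∫ x in ball x₀ r, ‖u x‖ ^ p := by
          gcongr; exact min_le_right _ _
      _ ≤ ∫ x in ball x₀ r, ‖fderiv ℝ u x‖ ^ p := h
      _ ≤ _ := le_add_of_nonneg_right hW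
end

section
/- Let $a\in A^\alpha_\infty(\mathbb{R}^{2d})$ and define $\lambda(a,h)=\inf_B \frac{1}{|B|}\int_B a$, the infimum over balls $B$ of radius $h^{1/2}$. Then there exist constants $M_1,M_2,\kappa_1,\kappa_2>0$ depending only on $\alpha$ and $d$ such that for $0<h'\leq h$: $M_1 (h/h')^{-\kappa_1}\lambda(a,h)\leq \lambda(a,h')\leq M_2 (h/h')^{\kappa_2}\lambda(a,h)$. In particular, $\lambda(a,h)$ is finite and positive for some $h>0$ if and only if it is so for all $h>0$. -/
/-!
An `A_∞^α` weight is doubling: the ball of radius `r` fills the fraction `1 - α` of the ball of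
radius `c r` as soon as `(1 - α) c^n ≤ 1`, so `α ∫_{B(x, c r)} a ≤ ∫_{B(x, r)} a`. Iterating,
the mass of `a` on concentric balls grows at most polynomially in the ratio of the radii, with
exponent `κ = log_c α⁻¹`. Shrinking the ball therefore lowers averages by at most a factor
`α (R / r)^{-κ}` and raises them by at most `(R / r)^n`, the ratio of the volumes; taking infima
over the centres gives the comparison of `λ(a, h)` and `λ(a, h')` with `R / r = (h / h')^{1/2}`.
-/

open MeasureTheory Metric Set
open scoped ENNReal

/-- `λ(a,h)`: the infimum of the averages of `a` over balls of radius `h^{1/2}`. -/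
noncomputable def lam (d : ℕ) (a : EuclideanSpace ℝ (Fin (2 * d)) → ℝ) (h : ℝ) : ℝ :=
  ⨅ z₀ : EuclideanSpace ℝ (Fin (2 * d)),
    (volume (ball z₀ (Real.sqrt h))).toReal⁻¹ * ∫ z in ball z₀ (Real.sqrt h), a z

lemma exists_one_lt_mul_pow_le_one {β : ℝ} (hβ₀ : 0 < β) (hβ₁ : β < 1) (n : ℕ) :
    ∃ c > 1, β * c ^ n ≤ 1 := by
  -- the `(n + 1)`-st root rather than the `n`-th, so that `c > 1` also when `n = 0`
  set c := β⁻¹ ^ ((n + 1 : ℕ) : ℝ)⁻¹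
  have hc : 1 < c := Real.one_lt_rpow ((one_lt_inv₀ hβ₀).2 hβ₁) (by positivity)
  refine ⟨c, hc, ?_⟩
  calc β * c ^ n ≤ β * c ^ (n + 1) := by gcongr; exacts [hc.le, n.le_succ]
    _ = 1 := by
      rw [Real.rpow_inv_natCast_pow (by positivity) n.succ_ne_zero, mul_inv_cancel₀ hβ₀.ne']

lemma mul_rpow_neg_logb_inv_le_pow_ceil_logb {α c t : ℝ} (hα₀ : 0 < α) (hα₁ : α ≤ 1)
    (hc : 1 < c) (ht : 1 ≤ t) :
    α * t ^ (-Real.logb c α⁻¹) ≤ α ^ ⌈Real.logb c t⌉₊ := by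
  set κ := Real.logb c α⁻¹
  set L := Real.logb c t
  have hκ : 0 ≤ κ := Real.logb_nonneg hc (one_le_inv₀ hα₀ |>.2 hα₁)
  have hα : α = c ^ (-κ) := by
    rw [Real.rpow_neg (by positivity), Real.rpow_logb (by positivity) hc.ne' (by positivity),
      inv_inv]
  have hk : (⌈L⌉₊ : ℝ) ≤ L + 1 := (Nat.ceil_lt_add_one (Real.logb_nonneg hc ht)).le
  calc α * t ^ (-κ) = c ^ (-κ + L * -κ) := by
        rw [Real.rpow_add (by positivity), Real.rpow_mul (by positivity),
          Real.rpow_logb (by positivity) hc.ne' (by positivity), ← hα]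
    _ ≤ c ^ (-κ * ⌈L⌉₊) := Real.rpow_le_rpow_of_exponent_le hc.le (by nlinarith)
    _ = α ^ ⌈L⌉₊ := by rw [Real.rpow_mul_natCast (by positivity), ← hα]

lemma le_pow_ceil_logb {c t : ℝ} (hc : 1 < c) (ht : 0 < t) : t ≤ c ^ ⌈Real.logb c t⌉₊ := by
  calc t = c ^ Real.logb c t := (Real.rpow_logb (by positivity) hc.ne' ht).symm
    _ ≤ c ^ (⌈Real.logb c t⌉₊ : ℝ) := Real.rpow_le_rpow_of_exponent_le hc.le (Nat.le_ceil _)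
    _ = c ^ ⌈Real.logb c t⌉₊ := Real.rpow_natCast c _

lemma volume_real_ball_pos {n : ℕ} (x : EuclideanSpace ℝ (Fin n)) {r : ℝ} (hr : 0 < r) :
    0 < volume.real (ball x r) :=
  ENNReal.toReal_pos (measure_ball_pos volume x hr).ne' measure_ball_lt_top.ne

lemma volume_real_ball_eq_div_pow_mul {n : ℕ} (x : EuclideanSpace ℝ (Fin n)) {r R : ℝ} (hr : 0 < r)
    (hR : 0 < R) : volume.real (ball x R) = (R / r) ^ n * volume.real (ball x r) := by
  simp only [measureReal_def, Measure.addHaar_ball_of_pos volume x hR,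
    Measure.addHaar_ball_of_pos volume x hr, finrank_euclideanSpace_fin, ENNReal.toReal_mul,
    ENNReal.toReal_ofReal (by positivity : 0 ≤ R ^ n),
    ENNReal.toReal_ofReal (by positivity : 0 ≤ r ^ n), div_pow]
  field_simp

namespace IsAinfty

variable {n : ℕ} {α : ℝ} {a : EuclideanSpace ℝ (Fin n) → ℝ}

lemma ae_nonneg (ha : IsAinfty n α a) : 0 ≤ᵐ[volume] a :=
  ha.2.1.mono fun _ hx => hx.le

lemma integrableOn_ball (ha : IsAinfty n α a) (x : EuclideanSpace ℝ (Fin n)) (r : ℝ) :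
    IntegrableOn a (ball x r) :=
  (ha.1.integrableOn_isCompact (isCompact_closedBall x r)).mono_set ball_subset_closedBall

lemma setIntegral_ball_nonneg (ha : IsAinfty n α a) (x : EuclideanSpace ℝ (Fin n)) (r : ℝ) :
    0 ≤ ∫ z in ball x r, a z :=
  setIntegral_nonneg_of_ae ha.ae_nonneg

lemma setIntegral_ball_mono (ha : IsAinfty n α a) (x : EuclideanSpace ℝ (Fin n)) {r R : ℝ}
    (hrR : r ≤ R) : ∫ z in ball x r, a z ≤ ∫ z in ball x R, a z :=
  setIntegral_mono_set (ha.integrableOn_ball x R) (ae_restrict_of_ae ha.ae_nonneg)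
    (ball_subset_ball hrR).eventuallyLE

lemma setAverage_ball_nonneg (ha : IsAinfty n α a) (x : EuclideanSpace ℝ (Fin n)) (r : ℝ) :
    0 ≤ ⨍ z in ball x r, a z := by
  rw [setAverage_eq, smul_eq_mul]
  exact mul_nonneg (inv_nonneg.2 measureReal_nonneg) (ha.setIntegral_ball_nonneg x r)

lemma mul_setIntegral_ball_mul_le (ha : IsAinfty n α a) {c : ℝ} (hc : 1 ≤ c)
    (hcα : (1 - α) * c ^ n ≤ 1) (x : EuclideanSpace ℝ (Fin n)) {r : ℝ} (hr : 0 < r) :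
    α * ∫ z in ball x (c * r), a z ≤ ∫ z in ball x r, a z := by
  have hcr : 0 < c * r := by positivity
  refine ha.2.2 x (c * r) hcr (ball x r) (ball_subset_ball (le_mul_of_one_le_left hr.le hc))
    measurableSet_ball ?_
  rw [Measure.addHaar_ball_of_pos volume x hcr, Measure.addHaar_ball_of_pos volume x hr,
    finrank_euclideanSpace_fin, ← mul_assoc, ← ENNReal.ofReal_mul' (by positivity)]
  gcongr
  calc (1 - α) * (c * r) ^ n = (1 - α) * c ^ n * r ^ n := by ring
    _ ≤ r ^ n := mul_le_of_le_one_left (by positivity) hcα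

lemma pow_mul_setIntegral_ball_pow_mul_le (ha : IsAinfty n α a) (hα : 0 ≤ α) {c : ℝ}
    (hc : 1 ≤ c) (hcα : (1 - α) * c ^ n ≤ 1) (x : EuclideanSpace ℝ (Fin n)) {r : ℝ} (hr : 0 < r)
    (k : ℕ) :
    α ^ k * ∫ z in ball x (c ^ k * r), a z ≤ ∫ z in ball x r, a z := by
  induction k with
  | zero => simp
  | succ k ih =>
    calc α ^ (k + 1) * ∫ z in ball x (c ^ (k + 1) * r), a z
        = α ^ k * (α * ∫ z in ball x (c * (c ^ k * r)), a z) := by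
          rw [show c ^ (k + 1) * r = c * (c ^ k * r) by ring]; ring
      _ ≤ α ^ k * ∫ z in ball x (c ^ k * r), a z := by
          gcongr
          exact ha.mul_setIntegral_ball_mul_le hc hcα x (by positivity)
      _ ≤ ∫ z in ball x r, a z := ih

lemma mul_rpow_mul_setIntegral_ball_le (ha : IsAinfty n α a) (hα₀ : 0 < α) (hα₁ : α ≤ 1)
    {c : ℝ} (hc : 1 < c) (hcα : (1 - α) * c ^ n ≤ 1) (x : EuclideanSpace ℝ (Fin n)) {r R : ℝ}
    (hr : 0 < r) (hrR : r ≤ R) :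
    α * (R / r) ^ (-Real.logb c α⁻¹) * ∫ z in ball x R, a z ≤ ∫ z in ball x r, a z := by
  set k := ⌈Real.logb c (R / r)⌉₊
  have hR : R ≤ c ^ k * r :=
    (div_le_iff₀ hr).1 (le_pow_ceil_logb hc (div_pos (hr.trans_le hrR) hr))
  calc α * (R / r) ^ (-Real.logb c α⁻¹) * ∫ z in ball x R, a z
      ≤ α ^ k * ∫ z in ball x (c ^ k * r), a z := by
        refine mul_le_mul ?_ (ha.setIntegral_ball_mono x hR) (ha.setIntegral_ball_nonneg x R)
          (by positivity)
        exact mul_rpow_neg_logb_inv_le_pow_ceil_logb hα₀ hα₁ hc ((one_le_div hr).2 hrR)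
    _ ≤ ∫ z in ball x r, a z :=
        ha.pow_mul_setIntegral_ball_pow_mul_le hα₀.le hc.le hcα x hr k

lemma setAverage_ball_le (ha : IsAinfty n α a) (x : EuclideanSpace ℝ (Fin n)) {r R : ℝ}
    (hr : 0 < r) (hrR : r ≤ R) :
    ⨍ z in ball x r, a z ≤ (R / r) ^ n * ⨍ z in ball x R, a z := by
  have hR := hr.trans_le hrR
  simp only [setAverage_eq, smul_eq_mul]
  rw [volume_real_ball_eq_div_pow_mul x hr hR, mul_inv, mul_assoc,
    mul_inv_cancel_left₀ (by positivity)]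
  exact mul_le_mul_of_nonneg_left (ha.setIntegral_ball_mono x hrR) (by positivity)

lemma mul_rpow_mul_setAverage_ball_le (ha : IsAinfty n α a) (hα₀ : 0 < α) (hα₁ : α ≤ 1)
    {c : ℝ} (hc : 1 < c) (hcα : (1 - α) * c ^ n ≤ 1) (x : EuclideanSpace ℝ (Fin n)) {r R : ℝ}
    (hr : 0 < r) (hrR : r ≤ R) :
    α * (R / r) ^ (-Real.logb c α⁻¹) * ⨍ z in ball x R, a z ≤ ⨍ z in ball x r, a z := by
  have hR := hr.trans_le hrR
  have hBr := volume_real_ball_pos x hr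
  have hBrR : volume.real (ball x r) ≤ volume.real (ball x R) :=
    measureReal_mono (ball_subset_ball hrR) measure_ball_lt_top.ne
  simp only [setAverage_eq, smul_eq_mul]
  calc α * (R / r) ^ (-Real.logb c α⁻¹) * ((volume.real (ball x R))⁻¹ * ∫ z in ball x R, a z)
      = (volume.real (ball x R))⁻¹ *
          (α * (R / r) ^ (-Real.logb c α⁻¹) * ∫ z in ball x R, a z) := by
        ring
    _ ≤ (volume.real (ball x r))⁻¹ * ∫ z in ball x r, a z := by
        refine mul_le_mul (inv_anti₀ hBr hBrR)
          (ha.mul_rpow_mul_setIntegral_ball_le hα₀ hα₁ hc hcα x hr hrR) ?_ (by positivity)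
        exact mul_nonneg (by positivity) (ha.setIntegral_ball_nonneg x R)

end IsAinfty

lemma lam_eq_iInf_setAverage (d : ℕ) (a : EuclideanSpace ℝ (Fin (2 * d)) → ℝ) (h : ℝ) :
    lam d a h = ⨅ z₀, ⨍ z in ball z₀ (Real.sqrt h), a z := by
  simp only [lam, setAverage_eq, smul_eq_mul, measureReal_def]

namespace IsAinfty

variable {d : ℕ} {α : ℝ} {a : EuclideanSpace ℝ (Fin (2 * d)) → ℝ}

lemma lam_nonneg (ha : IsAinfty (2 * d) α a) (h : ℝ) : 0 ≤ lam d a h := by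
  rw [lam_eq_iInf_setAverage]
  exact Real.iInf_nonneg fun z => ha.setAverage_ball_nonneg z _

lemma lam_le_rpow_mul_lam (ha : IsAinfty (2 * d) α a) {h h' : ℝ} (hh' : 0 < h')
    (hle : h' ≤ h) :
    lam d a h' ≤ (h / h') ^ (d : ℝ) * lam d a h := by
  have hh := hh'.trans_le hle
  have hratio : (Real.sqrt h / Real.sqrt h') ^ (2 * d) = (h / h') ^ (d : ℝ) := by
    rw [← Real.sqrt_div' _ hh'.le, pow_mul, Real.sq_sqrt (by positivity), Real.rpow_natCast]
  rw [lam_eq_iInf_setAverage, lam_eq_iInf_setAverage, Real.mul_iInf_of_nonneg (by positivity)]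
  refine ciInf_mono ⟨0, forall_mem_range.2 fun z => ha.setAverage_ball_nonneg z _⟩ fun z => ?_
  rw [← hratio]
  exact ha.setAverage_ball_le z (Real.sqrt_pos.2 hh') (Real.sqrt_le_sqrt hle)

lemma mul_rpow_mul_lam_le_lam (ha : IsAinfty (2 * d) α a) (hα₀ : 0 < α) (hα₁ : α ≤ 1)
    {c : ℝ} (hc : 1 < c) (hcα : (1 - α) * c ^ (2 * d) ≤ 1) {h h' : ℝ} (hh' : 0 < h')
    (hle : h' ≤ h) :
    α * (h / h') ^ (-(Real.logb c α⁻¹ / 2)) * lam d a h ≤ lam d a h' := by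
  have hh := hh'.trans_le hle
  have hratio : (Real.sqrt h / Real.sqrt h') ^ (-Real.logb c α⁻¹) =
      (h / h') ^ (-(Real.logb c α⁻¹ / 2)) := by
    rw [← Real.sqrt_div' _ hh'.le, Real.sqrt_eq_rpow, ← Real.rpow_mul (by positivity)]
    ring_nf
  rw [lam_eq_iInf_setAverage, lam_eq_iInf_setAverage, Real.mul_iInf_of_nonneg (by positivity)]
  refine ciInf_mono ⟨0, forall_mem_range.2 fun z => ?_⟩ fun z => ?_
  · exact mul_nonneg (by positivity) (ha.setAverage_ball_nonneg z _)
  rw [← hratio]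
  exact ha.mul_rpow_mul_setAverage_ball_le hα₀ hα₁ hc hcα z (Real.sqrt_pos.2 hh')
    (Real.sqrt_le_sqrt hle)

end IsAinfty

/-- comparison of `λ(a,h)` at different scales for `A_∞` symbols. -/
theorem stmt16 (d : ℕ) (α : ℝ) (hα : α ∈ Set.Ioo (0:ℝ) 1) :
    ∃ M₁ > (0:ℝ), ∃ M₂ > (0:ℝ), ∃ κ₁ > (0:ℝ), ∃ κ₂ > (0:ℝ),
      ∀ a : EuclideanSpace ℝ (Fin (2 * d)) → ℝ, IsAinfty (2 * d) α a →
        ∀ h h' : ℝ, 0 < h' → h' ≤ h →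
          M₁ * (h / h') ^ (-κ₁) * lam d a h ≤ lam d a h' ∧
          lam d a h' ≤ M₂ * (h / h') ^ κ₂ * lam d a h := by
  obtain ⟨hα₀, hα₁⟩ := hα
  obtain ⟨c, hc, hcα⟩ := exists_one_lt_mul_pow_le_one (β := 1 - α) (by linarith) (by linarith)
    (2 * d)
  have hκ : 0 < Real.logb c α⁻¹ := Real.logb_pos hc ((one_lt_inv₀ hα₀).2 hα₁)
  refine ⟨α, hα₀, 1, one_pos, Real.logb c α⁻¹ / 2, by positivity, d + 1, by positivity,
    fun a ha h h' hh' hle => ⟨ha.mul_rpow_mul_lam_le_lam hα₀ hα₁.le hc hcα hh' hle, ?_⟩⟩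
  have hq : 1 ≤ h / h' := (one_le_div hh').2 hle
  calc lam d a h' ≤ (h / h') ^ (d : ℝ) * lam d a h := ha.lam_le_rpow_mul_lam hh' hle
    _ ≤ 1 * (h / h') ^ ((d : ℝ) + 1) * lam d a h := by
        rw [one_mul]
        exact mul_le_mul_of_nonneg_right (Real.rpow_le_rpow_of_exponent_le hq (by linarith))
          (ha.lam_nonneg h)
end
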